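/- Let $\mathcal{B}$ be a separable subset of $B(\ell^2)$. Then there exist integers $0 = r_1 < r_2 < \cdots$ such that for every $T \in \mathcal{B}$, the operator $T - \sum_{k=1}^\infty (Q_{k-1} + Q_k + Q_{k+1}) T Q_k$ is compact, where $Q_0 = 0$ and $Q_k$ is the orthogonal projection of $\ell^2$ onto $\ell^2([r_k+1, r_{k+1}])$, and the series converges in the strong operator topology. In other words, every operator in $\mathcal{B}$ is simultaneously block-tridiagonalizable up to compact perturbation with respect to a single decomposition of $\ell^2$ into finite dimensional blocks. -/

import Mathlib

open scoped ENNReal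
noncomputable section
namespace Paper

instance : Fact ((1:ℝ≥0∞) ≤ 2) := ⟨one_le_two⟩

section lpMaps
variable {E : ℕ → Type*} [∀ i, NormedAddCommGroup (E i)] [∀ i, NormedSpace ℂ (E i)]

/-- Canonical coordinate projection `Q i` from the `ℓᵖ`-direct sum onto `E i`. -/
def lpProj (p : ℝ≥0∞) [Fact (1 ≤ p)] (i : ℕ) : lp E p →L[ℂ] E i :=
  LinearMap.mkContinuous
    { toFun := fun f => f i
      map_add' := fun f g => rfl
      map_smul' := fun c f => rfl }
    1 fun f => by
      have h1 : (1:ℝ≥0∞) ≤ p := Fact.out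
      have hp0 : p ≠ 0 := by intro h; rw [h] at h1; simp at h1
      simp only [one_mul]
      exact lp.norm_apply_le_norm hp0 f i

/-- Canonical inclusion `J i` of `E i` into the `ℓᵖ`-direct sum. -/
def lpIncl (p : ℝ≥0∞) [Fact (1 ≤ p)] (hp : p ≠ ⊤) (i : ℕ) : E i →L[ℂ] lp E p :=
  LinearMap.mkContinuous
    { toFun := fun a => lp.single p i a
      map_add' := fun a b => by
        apply lp.ext; funext j
        by_cases h : j = i
        · subst h
          simp [lp.single_apply_self, lp.coeFn_add]
        · simp [lp.single_apply_ne p i _ h, lp.coeFn_add]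
      map_smul' := fun c a => lp.single_smul p i c a }
    1 fun a => by
      have h1 : (1:ℝ≥0∞) ≤ p := Fact.out
      have hp0 : p ≠ 0 := by intro h; rw [h] at h1; simp at h1
      have hpt : 0 < p.toReal := ENNReal.toReal_pos hp0 hp
      have := lp.norm_single (E := E) (p := p) (ENNReal.toReal_pos_iff.mp hpt).1 i a
      exact le_of_eq (by simpa using this)

end lpMaps

section Fredholm
variable {X Y : Type*} [NormedAddCommGroup X] [NormedSpace ℂ X]
  [NormedAddCommGroup Y] [NormedSpace ℂ Y]

/-- A bounded operator is Fredholm if its kernel is finite dimensional and its range has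
finite codimension. -/
def IsFredholm (T : X →L[ℂ] Y) : Prop :=
  FiniteDimensional ℂ (LinearMap.ker (T : X →ₗ[ℂ] Y)) ∧ FiniteDimensional ℂ (Y ⧸ LinearMap.range (T : X →ₗ[ℂ] Y))

/-- The Fredholm index `dim ker T - codim ran T`. -/
def fredholmIndex (T : X →L[ℂ] Y) : ℤ :=
  (Module.finrank ℂ (LinearMap.ker (T : X →ₗ[ℂ] Y)) : ℤ) - (Module.finrank ℂ (Y ⧸ LinearMap.range (T : X →ₗ[ℂ] Y)) : ℤ)

/-- The essential norm: the distance to the compact operators. -/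
def essNorm (T : X →L[ℂ] Y) : ℝ :=
  ⨅ K : {K : X →L[ℂ] Y // IsCompactOperator ⇑K}, ‖T - (K : X →L[ℂ] Y)‖

end Fredholm

/-- The canonical projection of `ℓ²` onto the coordinates in `[r k, r (k+1))`. -/
def blockProj (r : ℕ → ℕ) (k : ℕ) :
    lp (fun _ : ℕ => ℂ) 2 →L[ℂ] lp (fun _ : ℕ => ℂ) 2 :=
  ∑ i ∈ Finset.Ico (r k) (r (k+1)),
    (lpIncl (E := fun _ : ℕ => ℂ) 2 (by norm_num) i).comp (lpProj 2 i)


/-- `ℓ²(ℕ)`. -/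
abbrev L2 := lp (fun _ : ℕ => ℂ) 2

/-- `ℓᵖ(ℕ)`. -/
abbrev Lp (p : ℝ≥0∞) := lp (fun _ : ℕ => ℂ) p

/-- The blocks `ℓ²([r k, r (k+1)))` as abstract finite dimensional Hilbert spaces. -/
abbrev Eb (r : ℕ → ℕ) : ℕ → Type := fun k => EuclideanSpace ℂ (Fin (r (k+1) - r k))



/-! Enumerate a dense sequence `eₙ` of `𝓑` and write `P m` for the projection onto the first `m`
coordinates. Since `A P m` has finite rank, the cuts `r` can be chosen inductively so that for all
`n ≤ k` both corners `(1 - P r(k+1)) eₙ P r(k)` and `P r(k) eₙ (1 - P r(k+1))` have norm at most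
`2⁻ᵏ`. For `T = eₙ` the `k`-th term `(1 - Q_{k-1} - Q_k - Q_{k+1}) T Q_k` of `T - D` factors through
two such corners, so the series for `T - D` converges in norm and `T - D` is a norm limit of
finite-rank operators. Each of the three block diagonals of `D` is a sum of orthogonal pieces, so
`‖D‖ ≤ 3 ‖T‖`; hence the set of `T` with `T - D` compact is closed, and contains all of `𝓑`. -/

open Filter Function Topology
open scoped InnerProductSpace

section PairwiseOrthogonal

variable {𝕜 E ι : Type*} [RCLike 𝕜] [NormedAddCommGroup E] [InnerProductSpace 𝕜 E] {v : ι → E}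

theorem orthogonalFamily_span_singleton (hv : Pairwise fun i j => ⟪v i, v j⟫_𝕜 = 0) :
    OrthogonalFamily 𝕜 (fun i => 𝕜 ∙ v i) fun i => (𝕜 ∙ v i).subtypeₗᵢ :=
  OrthogonalFamily.of_pairwise fun _ _ hij => Submodule.isOrtho_span.2 <| by
    rintro _ rfl _ rfl
    exact hv hij

theorem norm_sum_sq_of_pairwise_inner_eq_zero (hv : Pairwise fun i j => ⟪v i, v j⟫_𝕜 = 0)
    (s : Finset ι) : ‖∑ i ∈ s, v i‖ ^ 2 = ∑ i ∈ s, ‖v i‖ ^ 2 :=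
  (orthogonalFamily_span_singleton hv).norm_sum
    (fun i => ⟨v i, Submodule.mem_span_singleton_self _⟩) s

theorem summable_of_pairwise_inner_eq_zero [CompleteSpace E]
    (hv : Pairwise fun i j => ⟪v i, v j⟫_𝕜 = 0) (h : Summable fun i => ‖v i‖ ^ 2) :
    Summable v :=
  ((orthogonalFamily_span_singleton hv).summable_iff_norm_sq_summable
    (fun i => ⟨v i, Submodule.mem_span_singleton_self _⟩)).2 h

theorem HasSum.norm_sq_of_pairwise_inner_eq_zero (hv : Pairwise fun i j => ⟪v i, v j⟫_𝕜 = 0)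
    {a : E} (h : HasSum v a) : HasSum (fun i => ‖v i‖ ^ 2) (‖a‖ ^ 2) := by
  simpa only [HasSum, norm_sum_sq_of_pairwise_inner_eq_zero hv] using h.norm.pow 2

end PairwiseOrthogonal

theorem isCompactOperator_tsum {𝕜 E F : Type*} [NontriviallyNormedField 𝕜]
    [NormedAddCommGroup E] [NormedSpace 𝕜 E] [NormedAddCommGroup F] [NormedSpace 𝕜 F]
    [CompleteSpace F] {T : ℕ → E →L[𝕜] F} (hT : ∀ k, IsCompactOperator (T k))
    (hs : Summable T) : IsCompactOperator ⇑(∑' k, T k) :=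
  isCompactOperator_of_tendsto hs.hasSum.tendsto_sum_nat <| .of_forall fun _ =>
    Submodule.sum_mem (compactOperator _ E F) fun k _ => hT k

def coordProj (s : Finset ℕ) : L2 →L[ℂ] L2 :=
  ∑ i ∈ s, (lpIncl (E := fun _ : ℕ => ℂ) 2 (by norm_num) i).comp (lpProj 2 i)

local notation:max "𝐏" m:max => coordProj (Finset.range m)

section CoordProj

theorem coordProj_apply_eq_sum (s : Finset ℕ) (x : L2) :
    coordProj s x = ∑ i ∈ s, lp.single 2 i (x i) := by
  simp only [coordProj, FunLike.coe_sum, Finset.sum_apply]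
  rfl

theorem coordProj_apply (s : Finset ℕ) (x : L2) (j : ℕ) :
    coordProj s x j = if j ∈ s then x j else 0 := by
  classical
  rw [coordProj_apply_eq_sum, lp.coeFn_sum, Finset.sum_apply]
  simp [lp.single_apply, Pi.single_apply]

theorem coordProj_mul_coordProj (s t : Finset ℕ) :
    coordProj s * coordProj t = coordProj (s ∩ t) := by
  ext x j
  simp only [mul_apply_eq_comp, coordProj_apply, Finset.mem_inter]
  split_ifs <;> tauto

theorem coordProj_empty : coordProj ∅ = 0 := Finset.sum_empty

theorem coordProj_union {s t : Finset ℕ} (h : Disjoint s t) :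
    coordProj (s ∪ t) = coordProj s + coordProj t :=
  Finset.sum_union h

theorem sum_coordProj {ι : Type*} {B : ι → Finset ℕ} (hB : Pairwise (Disjoint on B))
    (s : Finset ι) : ∑ i ∈ s, coordProj (B i) = coordProj (s.biUnion B) := by
  classical
  exact (Finset.sum_biUnion (hB.set_pairwise _)).symm

theorem coordProj_Ico {a b : ℕ} (hab : a ≤ b) : coordProj (Finset.Ico a b) = 𝐏 b - 𝐏 a := by
  rw [eq_sub_iff_add_eq', Finset.range_eq_Ico, Finset.range_eq_Ico,
    ← coordProj_union (Finset.Ico_disjoint_Ico_consecutive 0 a b),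
    Finset.Ico_union_Ico_eq_Ico (Nat.zero_le a) hab]

theorem coordProj_range_mul_coordProj_range (a b : ℕ) : 𝐏 a * 𝐏 b = 𝐏 (min a b) := by
  rw [coordProj_mul_coordProj, Finset.range_inter_range]

theorem inner_coordProj_left (s : Finset ℕ) (x y : L2) :
    ⟪coordProj s x, y⟫_ℂ = ⟪x, coordProj s y⟫_ℂ := by
  simp only [lp.inner_eq_tsum, coordProj_apply]
  congr 1 with j
  split_ifs <;> simp

theorem isStarProjection_coordProj (s : Finset ℕ) : IsStarProjection (coordProj s) where
  isIdempotentElem := by rw [IsIdempotentElem, coordProj_mul_coordProj, Finset.inter_self]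
  isSelfAdjoint := ContinuousLinearMap.isSelfAdjoint_iff'.2 <|
    ((ContinuousLinearMap.eq_adjoint_iff _ _).2 (inner_coordProj_left s)).symm

theorem norm_coordProj_le (s : Finset ℕ) : ‖coordProj s‖ ≤ 1 :=
  (isStarProjection_coordProj s).norm_le

theorem norm_coordProj_apply_le (s : Finset ℕ) (x : L2) : ‖coordProj s x‖ ≤ ‖x‖ :=
  (coordProj s).le_of_opNorm_le (norm_coordProj_le s) x |>.trans_eq (one_mul _)

theorem inner_coordProj_coordProj_of_disjoint {s t : Finset ℕ} (h : Disjoint s t) (x y : L2) :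
    ⟪coordProj s x, coordProj t y⟫_ℂ = 0 := by
  rw [inner_coordProj_left, ← mul_apply_eq_comp, coordProj_mul_coordProj,
    Finset.disjoint_iff_inter_eq_empty.1 h, coordProj_empty, zero_apply, inner_zero_right]

theorem isCompactOperator_coordProj (s : Finset ℕ) : IsCompactOperator (coordProj s) :=
  Submodule.sum_mem (compactOperator (RingHom.id ℂ) L2 L2) fun i _ =>
    (isCompactOperator_of_locallyCompactSpace_dom (lpProj 2 i)).clm_comp
      (lpIncl 2 (by norm_num) i)

theorem isCompactOperator_mul_coordProj (A : L2 →L[ℂ] L2) (s : Finset ℕ) :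
    IsCompactOperator ⇑(A * coordProj s) := by
  rw [FunLike.coe_mul_eq_comp]
  exact (isCompactOperator_coordProj s).clm_comp A

theorem tendsto_coordProj_range (x : L2) : Tendsto (fun m => 𝐏 m x) atTop (𝓝 x) := by
  simpa only [coordProj_apply_eq_sum] using (lp.hasSum_single (by norm_num) x).tendsto_sum_nat

theorem norm_mul_coordProj_le (A : L2 →L[ℂ] L2) (s : Finset ℕ) :
    ‖A * coordProj s‖ ≤ ∑ i ∈ s, ‖A (lp.single 2 i 1)‖ := by
  refine ContinuousLinearMap.opNorm_le_bound _ (by positivity) fun x => ?_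
  have hx : A (coordProj s x) = ∑ i ∈ s, x i • A (lp.single 2 i 1) := by
    simp only [coordProj_apply_eq_sum, map_sum, ← map_smul, ← lp.single_smul, smul_eq_mul,
      mul_one]
  calc ‖(A * coordProj s) x‖ ≤ ∑ i ∈ s, ‖x i‖ * ‖A (lp.single 2 i 1)‖ := by
        rw [mul_apply_eq_comp, hx]
        exact (norm_sum_le _ _).trans_eq (by simp only [norm_smul])
    _ ≤ ∑ i ∈ s, ‖x‖ * ‖A (lp.single 2 i 1)‖ := by
        gcongr with i
        exact lp.norm_apply_le_norm (by norm_num) x i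
    _ = (∑ i ∈ s, ‖A (lp.single 2 i 1)‖) * ‖x‖ := by
        rw [Finset.sum_mul]
        simp only [mul_comm]

variable {ι : Type*} {B : ι → Finset ℕ}

theorem sum_norm_sq_coordProj_le (hB : Pairwise (Disjoint on B)) (x : L2) (s : Finset ι) :
    ∑ i ∈ s, ‖coordProj (B i) x‖ ^ 2 ≤ ‖x‖ ^ 2 := by
  have hv : Pairwise fun i j => ⟪coordProj (B i) x, coordProj (B j) x⟫_ℂ = 0 :=
    fun i j hij => inner_coordProj_coordProj_of_disjoint (hB hij) x x
  rw [← norm_sum_sq_of_pairwise_inner_eq_zero hv, ← sum_apply, sum_coordProj hB]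
  gcongr
  exact norm_coordProj_apply_le _ x

theorem summable_norm_sq_coordProj (hB : Pairwise (Disjoint on B)) (x : L2) :
    Summable fun i => ‖coordProj (B i) x‖ ^ 2 :=
  summable_of_sum_le (fun _ => by positivity) (sum_norm_sq_coordProj_le hB x)

theorem tsum_norm_sq_coordProj_le (hB : Pairwise (Disjoint on B)) (x : L2) :
    ∑' i, ‖coordProj (B i) x‖ ^ 2 ≤ ‖x‖ ^ 2 :=
  Real.tsum_le_of_sum_le (fun _ => by positivity) (sum_norm_sq_coordProj_le hB x)

end CoordProj

section BlockCompression

variable {ι : Type*} {B B' : ι → Finset ℕ}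

theorem norm_sq_coordProj_apply_coordProj_le (A : L2 →L[ℂ] L2) (x : L2) (i : ι) :
    ‖coordProj (B' i) (A (coordProj (B i) x))‖ ^ 2 ≤ ‖A‖ ^ 2 * ‖coordProj (B i) x‖ ^ 2 := by
  rw [← mul_pow]
  gcongr
  exact (norm_coordProj_apply_le _ _).trans (A.le_opNorm _)

theorem summable_coordProj_apply_coordProj (hB : Pairwise (Disjoint on B))
    (hB' : Pairwise (Disjoint on B')) (A : L2 →L[ℂ] L2) (x : L2) :
    Summable fun i => coordProj (B' i) (A (coordProj (B i) x)) :=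
  summable_of_pairwise_inner_eq_zero
    (fun _ _ hij => inner_coordProj_coordProj_of_disjoint (hB' hij) _ _)
    (.of_nonneg_of_le (fun _ => by positivity) (norm_sq_coordProj_apply_coordProj_le A x)
      ((summable_norm_sq_coordProj hB x).mul_left _))

theorem norm_tsum_coordProj_apply_coordProj_le (hB : Pairwise (Disjoint on B))
    (hB' : Pairwise (Disjoint on B')) (A : L2 →L[ℂ] L2) (x : L2) :
    ‖∑' i, coordProj (B' i) (A (coordProj (B i) x))‖ ≤ ‖A‖ * ‖x‖ := by
  have hsq := HasSum.norm_sq_of_pairwise_inner_eq_zero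
    (fun _ _ hij => inner_coordProj_coordProj_of_disjoint (hB' hij) _ _)
    (summable_coordProj_apply_coordProj hB hB' A x).hasSum
  refine pow_le_pow_iff_left₀ (norm_nonneg _) (by positivity) two_ne_zero |>.1 ?_
  calc ‖∑' i, coordProj (B' i) (A (coordProj (B i) x))‖ ^ 2
      = ∑' i, ‖coordProj (B' i) (A (coordProj (B i) x))‖ ^ 2 := hsq.tsum_eq.symm
    _ ≤ ∑' i, ‖A‖ ^ 2 * ‖coordProj (B i) x‖ ^ 2 :=
        hsq.summable.tsum_le_tsum (norm_sq_coordProj_apply_coordProj_le A x)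
          ((summable_norm_sq_coordProj hB x).mul_left _)
    _ ≤ ‖A‖ ^ 2 * ‖x‖ ^ 2 := by
        rw [tsum_mul_left]
        gcongr
        exact tsum_norm_sq_coordProj_le hB x
    _ = (‖A‖ * ‖x‖) ^ 2 := (mul_pow _ _ _).symm

def blockCompression (hB : Pairwise (Disjoint on B)) (hB' : Pairwise (Disjoint on B')) :
    (L2 →L[ℂ] L2) →L[ℂ] L2 →L[ℂ] L2 :=
  have hs := summable_coordProj_apply_coordProj hB hB'
  (LinearMap.mk₂ ℂ (fun A x => ∑' i, coordProj (B' i) (A (coordProj (B i) x)))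
    (fun A A' x => by simpa only [add_apply, map_add] using (hs A x).tsum_add (hs A' x))
    (fun c A x => by simpa only [smul_apply, map_smul] using (hs A x).tsum_const_smul c)
    (fun A x y => by simpa only [map_add] using (hs A x).tsum_add (hs A y))
    (fun c A x => by simpa only [map_smul] using (hs A x).tsum_const_smul c)).mkContinuous₂ 1
    fun A x => by
      rw [one_mul]
      exact norm_tsum_coordProj_apply_coordProj_le hB hB' A x

theorem hasSum_blockCompression (hB : Pairwise (Disjoint on B))
    (hB' : Pairwise (Disjoint on B')) (A : L2 →L[ℂ] L2) (x : L2) :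
    HasSum (fun i => coordProj (B' i) (A (coordProj (B i) x))) (blockCompression hB hB' A x) :=
  (summable_coordProj_apply_coordProj hB hB' A x).hasSum

end BlockCompression

section Tridiagonal

variable {r : ℕ → ℕ}

theorem blockProj_eq_coordProj (r : ℕ → ℕ) (k : ℕ) :
    blockProj r k = coordProj (Finset.Ico (r k) (r (k + 1))) :=
  rfl

theorem pairwise_disjoint_blocks (hr : Monotone r) :
    Pairwise (Disjoint on fun k => Finset.Ico (r k) (r (k + 1))) := fun _ _ hkl => by
  simpa only [onFun, ← Finset.disjoint_coe, Finset.coe_Ico, Order.succ_eq_add_one] using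
    hr.pairwise_disjoint_on_Ico_succ hkl

theorem pairwise_disjoint_blocks_succ (hr : Monotone r) :
    Pairwise (Disjoint on fun k => Finset.Ico (r (k + 1)) (r (k + 1 + 1))) :=
  (pairwise_disjoint_blocks hr).comp_of_injective (add_left_injective 1)

/-- The sum of the three block diagonals `Q_k A Q_{k+1}`, `Q_k A Q_k` and `Q_{k+1} A Q_k`. -/
def tridiag (hr : Monotone r) : (L2 →L[ℂ] L2) →L[ℂ] L2 →L[ℂ] L2 :=
  blockCompression (pairwise_disjoint_blocks_succ hr) (pairwise_disjoint_blocks hr) +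
    blockCompression (pairwise_disjoint_blocks hr) (pairwise_disjoint_blocks hr) +
    blockCompression (pairwise_disjoint_blocks hr) (pairwise_disjoint_blocks_succ hr)

def tridiagProj (r : ℕ → ℕ) (k : ℕ) : L2 →L[ℂ] L2 :=
  (if k = 0 then 0 else blockProj r (k - 1)) + blockProj r k + blockProj r (k + 1)

theorem hasSum_tridiag (hr : Monotone r) (A : L2 →L[ℂ] L2) (x : L2) :
    HasSum (fun k => tridiagProj r k (A (blockProj r k x))) (tridiag hr A x) := by
  have hsuper : HasSum (fun k => (if k = 0 then 0 else blockProj r (k - 1)) (A (blockProj r k x)))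
      (blockCompression (pairwise_disjoint_blocks_succ hr) (pairwise_disjoint_blocks hr) A x) := by
    refine (hasSum_nat_add_iff' 1).1 ?_
    simpa [blockProj_eq_coordProj] using
      hasSum_blockCompression (pairwise_disjoint_blocks_succ hr) (pairwise_disjoint_blocks hr) A x
  simpa only [tridiagProj, tridiag, add_apply, blockProj_eq_coordProj] using
    (hsuper.add (hasSum_blockCompression _ _ A x)).add (hasSum_blockCompression _ _ A x)

theorem hasSum_blockProj (hr0 : r 0 = 0) (hr : StrictMono r) (x : L2) :
    HasSum (fun k => blockProj r k x) x := by
  have hs : Summable fun k => blockProj r k x :=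
    summable_of_pairwise_inner_eq_zero
      (fun _ _ hkl =>
        inner_coordProj_coordProj_of_disjoint (pairwise_disjoint_blocks hr.monotone hkl) x x)
      (summable_norm_sq_coordProj (pairwise_disjoint_blocks hr.monotone) x)
  have hpartial : ∀ N, ∑ k ∈ Finset.range N, blockProj r k x = 𝐏 (r N) x := fun N => by
    simp only [blockProj_eq_coordProj, coordProj_Ico (hr.monotone (Nat.le_succ _)), ← sum_apply,
      Finset.sum_range_sub (fun k => 𝐏 (r k)), hr0, Finset.range_zero, coordProj_empty, sub_zero]
  have hlim : Tendsto (fun N => ∑ k ∈ Finset.range N, blockProj r k x) atTop (𝓝 x) := by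
    simpa only [hpartial, comp_def] using (tendsto_coordProj_range x).comp hr.tendsto_atTop
  obtain ⟨a, ha⟩ := hs
  exact tendsto_nhds_unique ha.tendsto_sum_nat hlim ▸ ha

theorem one_sub_tridiagProj_mul_blockProj (hr : Monotone r) (T : L2 →L[ℂ] L2) (k : ℕ) :
    (1 - tridiagProj r (k + 1)) * T * blockProj r (k + 1) =
      ((1 - 𝐏 (r (k + 3))) * T * 𝐏 (r (k + 2)) + 𝐏 (r k) * T * (1 - 𝐏 (r (k + 1)))) *
        blockProj r (k + 1) := by
  have hP {a b} (hab : a ≤ b) : 𝐏 (r a) * 𝐏 (r b) = 𝐏 (r a) ∧ 𝐏 (r b) * 𝐏 (r a) = 𝐏 (r a) := by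
    simp only [coordProj_range_mul_coordProj_range, min_eq_left (hr hab),
      min_eq_right (hr hab), and_self]
  have hQ : blockProj r (k + 1) = 𝐏 (r (k + 2)) - 𝐏 (r (k + 1)) :=
    coordProj_Ico (hr (Nat.le_succ _))
  have hR : tridiagProj r (k + 1) = 𝐏 (r (k + 3)) - 𝐏 (r k) := by
    simp only [tridiagProj, blockProj_eq_coordProj, if_neg k.succ_ne_zero, Nat.add_sub_cancel,
      coordProj_Ico (hr (Nat.le_succ _))]
    abel
  have hQ₂ : 𝐏 (r (k + 2)) * blockProj r (k + 1) = blockProj r (k + 1) := by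
    rw [hQ, mul_sub, (hP le_rfl).1, (hP (Nat.le_succ _)).2]
  have hQ₁ : (1 - 𝐏 (r (k + 1))) * blockProj r (k + 1) = blockProj r (k + 1) := by
    rw [hQ, sub_mul, one_mul, mul_sub, (hP (Nat.le_succ _)).1, (hP le_rfl).1, sub_self, sub_zero]
  rw [add_mul, mul_assoc _ (𝐏 _), mul_assoc (𝐏 (r k) * T), hQ₂, hQ₁, hR]
  noncomm_ring

theorem norm_one_sub_tridiagProj_mul_blockProj_le (hr : Monotone r) (T : L2 →L[ℂ] L2) (k : ℕ) :
    ‖(1 - tridiagProj r (k + 1)) * T * blockProj r (k + 1)‖ ≤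
      ‖(1 - 𝐏 (r (k + 3))) * T * 𝐏 (r (k + 2))‖ + ‖𝐏 (r k) * T * (1 - 𝐏 (r (k + 1)))‖ := by
  rw [one_sub_tridiagProj_mul_blockProj hr]
  refine (norm_mul_le_of_le le_rfl (norm_coordProj_le _)).trans ?_
  rw [mul_one]
  exact norm_add_le _ _

theorem isCompactOperator_sub_tridiag (hr0 : r 0 = 0) (hr : StrictMono r) (T : L2 →L[ℂ] L2)
    (hT : ∀ᶠ k in atTop, ‖(1 - 𝐏 (r (k + 1))) * T * 𝐏 (r k)‖ ≤ (1 / 2) ^ k ∧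
      ‖𝐏 (r k) * T * (1 - 𝐏 (r (k + 1)))‖ ≤ (1 / 2) ^ k) :
    IsCompactOperator ⇑(T - tridiag hr.monotone T) := by
  set E : ℕ → L2 →L[ℂ] L2 := fun k => (1 - tridiagProj r k) * T * blockProj r k
  have hE : Summable E := by
    refine (summable_nat_add_iff 1).1 <|
      .of_norm_bounded_eventually (summable_geometric_two.mul_left 2) ?_
    rw [Nat.cofinite_eq_atTop]
    filter_upwards [hT, (tendsto_add_atTop_nat 2).eventually hT] with k hk hk₂
    calc ‖E (k + 1)‖ ≤ (1 / 2) ^ (k + 2) + (1 / 2) ^ k :=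
          (norm_one_sub_tridiagProj_mul_blockProj_le hr.monotone T k).trans
            (add_le_add hk₂.1 hk.2)
      _ ≤ 2 * (1 / 2) ^ k := by
          rw [pow_add]
          linarith [pow_nonneg (by norm_num : (0 : ℝ) ≤ 1 / 2) k]
  have hsum : ∑' k, E k = T - tridiag hr.monotone T := by
    refine ContinuousLinearMap.ext fun x =>
      ((ContinuousLinearMap.apply ℂ L2 x).hasSum hE.hasSum).unique ?_
    simpa [E, sub_mul, tridiagProj] using
      ((hasSum_blockProj hr0 hr x).mapL T).sub (hasSum_tridiag hr.monotone T x)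
  rw [← hsum]
  exact isCompactOperator_tsum (fun k => isCompactOperator_mul_coordProj _ _) hE

end Tridiagonal

section Cuts

theorem tendsto_norm_one_sub_coordProj_mul_mul (A : L2 →L[ℂ] L2) (m : ℕ) :
    Tendsto (fun m' => ‖(1 - 𝐏 m') * A * 𝐏 m‖) atTop (𝓝 0) := by
  have htail (y : L2) : Tendsto (fun m' => ‖y - 𝐏 m' y‖) atTop (𝓝 0) := by
    simpa using ((tendsto_const_nhds (x := y)).sub (tendsto_coordProj_range y)).norm
  refine squeeze_zero (fun _ => norm_nonneg _) (fun m' => norm_mul_coordProj_le _ _) ?_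
  simpa [sub_mul] using tendsto_finsetSum (Finset.range m) fun i _ => htail (A (lp.single 2 i 1))

theorem tendsto_norm_coordProj_mul_mul_one_sub (A : L2 →L[ℂ] L2) (m : ℕ) :
    Tendsto (fun m' => ‖𝐏 m * A * (1 - 𝐏 m')‖) atTop (𝓝 0) := by
  have hstar (m' : ℕ) : 𝐏 m * A * (1 - 𝐏 m') = star ((1 - 𝐏 m') * star A * 𝐏 m) := by
    simp only [star_mul, star_sub, star_one, star_star, mul_assoc,
      (isStarProjection_coordProj _).isSelfAdjoint.star_eq]
  refine (tendsto_norm_one_sub_coordProj_mul_mul (star A) m).congr fun m' => ?_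
  rw [hstar]
  exact (norm_star _).symm

theorem exists_cuts (e : ℕ → L2 →L[ℂ] L2) :
    ∃ r : ℕ → ℕ, r 0 = 0 ∧ StrictMono r ∧ ∀ n k, n ≤ k →
      ‖(1 - 𝐏 (r (k + 1))) * e n * 𝐏 (r k)‖ ≤ (1 / 2) ^ k ∧
      ‖𝐏 (r k) * e n * (1 - 𝐏 (r (k + 1)))‖ ≤ (1 / 2) ^ k := by
  have hnext (k m : ℕ) : ∃ m', m < m' ∧ ∀ n ≤ k,
      ‖(1 - 𝐏 m') * e n * 𝐏 m‖ ≤ (1 / 2) ^ k ∧ ‖𝐏 m * e n * (1 - 𝐏 m')‖ ≤ (1 / 2) ^ k := by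
    have hsmall (n : ℕ) : ∀ᶠ m' in atTop,
        ‖(1 - 𝐏 m') * e n * 𝐏 m‖ ≤ (1 / 2) ^ k ∧ ‖𝐏 m * e n * (1 - 𝐏 m')‖ ≤ (1 / 2) ^ k :=
      ((tendsto_norm_one_sub_coordProj_mul_mul (e n) m).eventually
        (eventually_le_nhds (by positivity))).and
        ((tendsto_norm_coordProj_mul_mul_one_sub (e n) m).eventually
          (eventually_le_nhds (by positivity)))
    exact ((eventually_gt_atTop m).and
      ((Set.finite_Iic k).eventually_all.2 fun n _ => hsmall n)).exists
  choose next hnext_gt hnext_small using hnext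
  let r : ℕ → ℕ := fun k => Nat.rec (motive := fun _ => ℕ) 0 next k
  exact ⟨r, rfl, strictMono_nat_of_lt_succ fun k => hnext_gt k (r k),
    fun n k hnk => hnext_small k (r k) n hnk⟩

end Cuts

theorem statement_2 (𝓑 : Set (L2 →L[ℂ] L2)) (h𝓑 : TopologicalSpace.IsSeparable 𝓑) :
    ∃ r : ℕ → ℕ, r 0 = 0 ∧ StrictMono r ∧
      ∀ T ∈ 𝓑, ∃ D : L2 →L[ℂ] L2,
        (∀ x : L2, HasSum
          (fun k => ((if k = 0 then 0 else blockProj r (k - 1)) + blockProj r k +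
            blockProj r (k + 1)) (T (blockProj r k x))) (D x)) ∧
        IsCompactOperator ⇑(T - D) := by
  obtain ⟨c, hc, h𝓑c⟩ := h𝓑
  obtain ⟨e, hce⟩ := Set.countable_iff_exists_subset_range.1 hc
  obtain ⟨r, hr0, hr, hcut⟩ := exists_cuts e
  have hclosed : IsClosed {A : L2 →L[ℂ] L2 | IsCompactOperator ⇑(A - tridiag hr.monotone A)} :=
    IsClosed.preimage (continuous_id.sub (tridiag hr.monotone).continuous)
      isClosed_setOfPred_isCompactOperator
  have hcompact : 𝓑 ⊆ {A | IsCompactOperator ⇑(A - tridiag hr.monotone A)} :=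
    h𝓑c.trans <| closure_minimal (hce.trans <| Set.range_subset_iff.2 fun n =>
      isCompactOperator_sub_tridiag hr0 hr (e n) <| (eventually_ge_atTop n).mono (hcut n))
      hclosed
  exact ⟨r, hr0, hr, fun T hT =>
    ⟨tridiag hr.monotone T, hasSum_tridiag hr.monotone T, hcompact hT⟩⟩

end Paper
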